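/- Let 𝒢₁ = (G₁, S, μ₁, l₁) and 𝒢₂ = (G₂, S, μ₂, l₂) be comparable reconciled gene trees, let α ∈ [0,1], and let uv be a redundant edge of G₁. Then PLR(𝒢₁, 𝒢₂) ≥ PLR(𝒢₁/uv, 𝒢₂). -/

import Mathlib

open SimpleGraph

attribute [local instance] Classical.propDecidable

/-- A rooted tree: a finite connected acyclic graph with a distinguished root. -/
structure RTree (V : Type*) [Fintype V] where
  adj : SimpleGraph V
  isTree : adj.IsTree
  root : V

variable {V : Type*} [Fintype V]

/-- `Anc T a b` : `a` is an ancestor of `b` (i.e. `b ⪯ a`), expressed as: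
`a` lies on the (unique) path from the root to `b`. -/
def Anc (T : RTree V) (a b : V) : Prop :=
  T.adj.dist T.root b = T.adj.dist T.root a + T.adj.dist a b

/-- `IsChild T c p` : `c` is a child of `p`. -/
def IsChild (T : RTree V) (c p : V) : Prop :=
  T.adj.Adj c p ∧ Anc T p c

/-- The set of children of `v`. -/
def childSet (T : RTree V) (v : V) : Set V := {c | IsChild T c v}

/-- A leaf is a node with no children. -/
def IsLeaf (T : RTree V) (v : V) : Prop := ∀ c, ¬ IsChild T c v

/-- The clade of `v`: the set of leaves descending from `v`. -/
def clade (T : RTree V) (v : V) : Set V := {x | IsLeaf T x ∧ Anc T v x}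

/-- `w` is the lowest common ancestor of the set `X` in `T`. -/
def IsLCA (T : RTree V) (X : Set V) (w : V) : Prop :=
  (∀ x ∈ X, Anc T w x) ∧ ∀ w', (∀ x ∈ X, Anc T w' x) → Anc T w' w

/-- A species tree is a rooted binary tree: every internal node has exactly two children. -/
def IsSpeciesTree (S : RTree V) : Prop :=
  ∀ v, ¬ IsLeaf S v → (childSet S v).ncard = 2

/-- Number of leaves of a rooted tree. -/
noncomputable def numLeaves (T : RTree V) : ℕ := {v | IsLeaf T v}.ncard

/-- `Hsum S` = `H(S)`: the sum of root-to-internal-node distances in `S`. -/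
noncomputable def Hsum (S : RTree V) : ℕ :=
  ∑ v : V, if IsLeaf S v then 0 else S.adj.dist S.root v

inductive Evt | dup | spec | extant
deriving DecidableEq

/-- A reconciled gene tree with species tree `S`, whose leaves are labeled bijectively by
the set of genes `Γ`. -/
structure Recon (Γ : Type*) (VG : Type*) (VS : Type*) [Fintype VG] [Fintype VS]
    (S : RTree VS) where
  tree : RTree VG
  geneLeaf : Γ → VG
  geneLeaf_inj : Function.Injective geneLeaf
  geneLeaf_range : ∀ v, IsLeaf tree v ↔ ∃ g, geneLeaf g = v
  μ : VG → VS
  lbl : VG → Evt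
  internal_children : ∀ v, ¬ IsLeaf tree v → 2 ≤ (childSet tree v).ncard
  leaf_species : ∀ v, IsLeaf tree v → IsLeaf S (μ v)
  leaf_lbl : ∀ v, IsLeaf tree v → lbl v = Evt.extant
  internal_lbl : ∀ v, ¬ IsLeaf tree v → lbl v = Evt.dup ∨ lbl v = Evt.spec
  time_consistent : ∀ a b, Anc tree a b → Anc S (μ a) (μ b)
  spec_two_children : ∀ v, lbl v = Evt.spec →
    ¬ IsLeaf S (μ v) ∧ (childSet tree v).ncard = 2
  spec_separates : ∀ v, lbl v = Evt.spec →
    ∀ v₁ v₂, IsChild tree v₁ v → IsChild tree v₂ v → v₁ ≠ v₂ →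
      ∃ s₁ s₂, IsChild S s₁ (μ v) ∧ IsChild S s₂ (μ v) ∧ s₁ ≠ s₂ ∧
        ((Anc S s₁ (μ v₁) ∧ Anc S s₂ (μ v₂)) ∨ (Anc S s₂ (μ v₁) ∧ Anc S s₁ (μ v₂)))

variable {Γ : Type*} {VS VG₁ VG₂ : Type*} [Fintype VS] [Fintype VG₁] [Fintype VG₂]
  {S : RTree VS}

/-- The clade of a gene tree node, as a set of genes. -/
def gclade (𝒢 : Recon Γ VG₁ VS S) (v : VG₁) : Set Γ :=
  {g | Anc 𝒢.tree v (𝒢.geneLeaf g)}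

/-- Two reconciled gene trees (over the same species tree and gene set) are comparable if
corresponding extant genes map to the same species. -/
def Comparable (𝒢₁ : Recon Γ VG₁ VS S) (𝒢₂ : Recon Γ VG₂ VS S) : Prop :=
  ∀ g, 𝒢₁.μ (𝒢₁.geneLeaf g) = 𝒢₂.μ (𝒢₂.geneLeaf g)

/-- `m` is the correspondence map `v ↦ lca_{G₂}(L(G₁(v)))`. -/
def IsLcaMap (𝒢₁ : Recon Γ VG₁ VS S) (𝒢₂ : Recon Γ VG₂ VS S) (m : VG₁ → VG₂) : Prop :=
  ∀ v, IsLCA 𝒢₂.tree (𝒢₂.geneLeaf '' gclade 𝒢₁ v) (m v)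

/-- `μ` is the lca-mapping: every node maps to the lca of the species of its leaf descendants. -/
def UsesLcaMapping (𝒢 : Recon Γ VG₁ VS S) : Prop :=
  ∀ v, IsLCA S (𝒢.μ '' clade 𝒢.tree v) (𝒢.μ v)

/-- The path component `d_path(𝒢₁,𝒢₂)` (with `m` the lca correspondence map). -/
noncomputable def dPath (𝒢₁ : Recon Γ VG₁ VS S) (𝒢₂ : Recon Γ VG₂ VS S)
    (m : VG₁ → VG₂) : ℕ :=
  ∑ v : VG₁, S.adj.dist (𝒢₁.μ v) (𝒢₂.μ (m v))

/-- The label component `d_lbl(𝒢₁,𝒢₂)`. -/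
noncomputable def dLbl (𝒢₁ : Recon Γ VG₁ VS S) (𝒢₂ : Recon Γ VG₂ VS S)
    (m : VG₁ → VG₂) : ℕ :=
  {v : VG₁ | 𝒢₁.lbl v ≠ 𝒢₂.lbl (m v)}.ncard

/-- The asymmetric dissimilarity `d_asym = α·d_path + (1−α)·d_lbl`. -/
noncomputable def dAsym (α : ℝ) (𝒢₁ : Recon Γ VG₁ VS S) (𝒢₂ : Recon Γ VG₂ VS S)
    (m : VG₁ → VG₂) : ℝ :=
  α * (dPath 𝒢₁ 𝒢₂ m : ℝ) + (1 - α) * (dLbl 𝒢₁ 𝒢₂ m : ℝ)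

/-- The Path-Label Reconciliation dissimilarity `PLR(𝒢₁,𝒢₂)`, where `m₁₂`, `m₂₁` are the
lca correspondence maps in the two directions. -/
noncomputable def PLR (α : ℝ) (𝒢₁ : Recon Γ VG₁ VS S) (𝒢₂ : Recon Γ VG₂ VS S)
    (m₁₂ : VG₁ → VG₂) (m₂₁ : VG₂ → VG₁) : ℝ :=
  dAsym α 𝒢₁ 𝒢₂ m₁₂ + dAsym α 𝒢₂ 𝒢₁ m₂₁

/-- An edge `uv` (with `u` the parent of `v`) is redundant if both endpoints are duplications
mapped to the same species. -/
def RedundantEdge (𝒢 : Recon Γ VG₁ VS S) (u v : VG₁) : Prop :=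
  IsChild 𝒢.tree v u ∧ 𝒢.μ u = 𝒢.μ v ∧ 𝒢.lbl u = Evt.dup ∧ 𝒢.lbl v = Evt.dup

/-- A reconciled gene tree is least duplication-resolved if it has no redundant edge. -/
def LeastDupResolved (𝒢 : Recon Γ VG₁ VS S) : Prop :=
  ∀ u v, ¬ RedundantEdge 𝒢 u v

/-- `𝒢'` is obtained from `𝒢` by contracting the edge `uv` (`u` the parent of `v`), i.e.
deleting `v` and attaching its children to `u`; `φ` is the corresponding quotient map. -/
def IsContractionOf (𝒢 : Recon Γ VG₁ VS S) (u v : VG₁) (𝒢' : Recon Γ VG₂ VS S)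
    (φ : VG₁ → VG₂) : Prop :=
  Function.Surjective φ ∧
  φ u = φ v ∧
  (∀ a b, φ a = φ b → a = b ∨ (a = u ∧ b = v) ∨ (a = v ∧ b = u)) ∧
  (∀ x y, 𝒢'.tree.adj.Adj x y ↔
    ∃ a b, φ a = x ∧ φ b = y ∧ 𝒢.tree.adj.Adj a b ∧ ¬(a = u ∧ b = v) ∧ ¬(a = v ∧ b = u)) ∧
  𝒢'.tree.root = φ 𝒢.tree.root ∧
  (∀ g, 𝒢'.geneLeaf g = φ (𝒢.geneLeaf g)) ∧
  (∀ a, 𝒢'.μ (φ a) = 𝒢.μ a) ∧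
  (∀ a, 𝒢'.lbl (φ a) = 𝒢.lbl a)

/-- Symmetrized redundancy relation on nodes. -/
def RedundantAdj (𝒢 : Recon Γ VG₁ VS S) (a b : VG₁) : Prop :=
  RedundantEdge 𝒢 a b ∨ RedundantEdge 𝒢 b a

/-- `𝒢'` is the least duplication-resolved tree `LR(𝒢)` obtained by contracting every
redundant edge of `𝒢`; `φ` is the corresponding quotient map. -/
def IsLROf (𝒢 : Recon Γ VG₁ VS S) (𝒢' : Recon Γ VG₂ VS S) (φ : VG₁ → VG₂) : Prop :=
  Function.Surjective φ ∧
  (∀ a b, φ a = φ b ↔ Relation.EqvGen (RedundantAdj 𝒢) a b) ∧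
  (∀ x y, 𝒢'.tree.adj.Adj x y ↔
    ∃ a b, φ a = x ∧ φ b = y ∧ 𝒢.tree.adj.Adj a b ∧ ¬ RedundantAdj 𝒢 a b) ∧
  𝒢'.tree.root = φ 𝒢.tree.root ∧
  (∀ g, 𝒢'.geneLeaf g = φ (𝒢.geneLeaf g)) ∧
  (∀ a, 𝒢'.μ (φ a) = 𝒢.μ a) ∧
  (∀ a, 𝒢'.lbl (φ a) = 𝒢.lbl a)

/-- Isomorphism of reconciled gene trees: a leaf-fixing bijection preserving edges,
species maps and event labels. -/
def ReconIso (𝒢₁ : Recon Γ VG₁ VS S) (𝒢₂ : Recon Γ VG₂ VS S) : Prop :=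
  ∃ φ : VG₁ ≃ VG₂,
    (∀ g, φ (𝒢₁.geneLeaf g) = 𝒢₂.geneLeaf g) ∧
    (∀ a b, 𝒢₂.tree.adj.Adj (φ a) (φ b) ↔ 𝒢₁.tree.adj.Adj a b) ∧
    (∀ v, 𝒢₂.μ (φ v) = 𝒢₁.μ v) ∧
    (∀ v, 𝒢₂.lbl (φ v) = 𝒢₁.lbl v)

/-- Exactly one gene per species: the gene set is the set of species leaves, and each gene
resides in its own species. -/
def OneGenePerSpecies (𝒢 : Recon {s : VS // IsLeaf S s} VG₁ VS S) : Prop :=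
  ∀ g, 𝒢.μ (𝒢.geneLeaf g) = g.1

/-!
Contracting `uv` merges `u` and `v` into one node and changes nothing else, and since `u` is
the parent of `v` every node other than `v` keeps its clade. Hence a node `a ≠ v` of `𝒢₁` and
its image in `𝒢₁/uv` are sent to the same node of `G₂`, so the terms of `d_asym(𝒢₁/uv, 𝒢₂)` are
those of `d_asym(𝒢₁, 𝒢₂)` without the one for `v`. In the other direction the lca in `𝒢₁/uv` of
a clade of `G₂` is the image of its lca in `𝒢₁`, and the image carries the same species and
label, so `d_asym(𝒢₂, 𝒢₁/uv) = d_asym(𝒢₂, 𝒢₁)`.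
-/

namespace SimpleGraph

variable {V V₂ : Type*} {G : SimpleGraph V} {G₂ : SimpleGraph V₂}

theorem IsTree.length_eq_dist (hG : G.IsTree) {a b : V} {p : G.Walk a b} (hp : p.IsPath) :
    p.length = G.dist a b := by
  obtain ⟨q, hq, hql⟩ := hG.connected.exists_path_of_dist a b
  obtain ⟨r, -, hr⟩ := hG.existsUnique_path a b
  rw [hr p hp, ← hr q hq, hql]

theorem IsAcyclic.exists_isPath_support_eq_image (hG : G.IsAcyclic) (φ : V → V₂)
    (hfib : ∀ a b, φ a = φ b → a = b ∨ G.Adj a b)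
    (hadj : ∀ a b, G.Adj a b → φ a ≠ φ b → G₂.Adj (φ a) (φ b)) :
    ∀ {a b : V} (p : G.Walk a b), p.IsPath →
      ∃ q : G₂.Walk (φ a) (φ b), q.IsPath ∧ ∀ x, x ∈ q.support ↔ ∃ c ∈ p.support, φ c = x
  | _, _, .nil, _ => ⟨.nil, .nil, by simp [eq_comm]⟩
  | a, _, .cons (v := w) haw p, hp => by
    obtain ⟨hp, ha⟩ := (Walk.cons_isPath_iff _ _).1 hp
    obtain ⟨q, hq, hsupp⟩ := hG.exists_isPath_support_eq_image φ hfib hadj p hp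
    have hsupp' : ∀ x, (∃ c ∈ (Walk.cons haw p).support, φ c = x) ↔ x = φ a ∨ x ∈ q.support := by
      simp only [Walk.support_cons, List.mem_cons, hsupp]
      grind
    by_cases hφ : φ a = φ w
    · refine ⟨q.copy hφ.symm rfl, by simpa using hq, fun x => ?_⟩
      rw [hsupp', Walk.support_copy]
      exact ⟨Or.inr, by rintro (rfl | h); exacts [hφ.symm ▸ q.start_mem_support, h]⟩
    · refine ⟨.cons (hadj a w haw hφ) q, (Walk.cons_isPath_iff _ _).2 ⟨hq, fun hmem => ?_⟩,
        fun x => by rw [Walk.support_cons, List.mem_cons, hsupp']⟩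
      obtain ⟨c, hc, hca⟩ := (hsupp _).1 hmem
      -- `c` would be a neighbour of `a` on the path through `w`, hence `w` itself
      rcases hfib a c hca.symm with rfl | hac
      · exact ha hc
      · have hcw : c = (Walk.cons haw p).snd :=
          hG.eq_snd_of_adj_start ((Walk.cons_isPath_iff _ _).2 ⟨hp, ha⟩) hac (by simp [hc])
        exact hφ (by rw [← hca, hcw, Walk.snd_cons])

end SimpleGraph

namespace RTree

variable {V V₂ : Type*} [Fintype V] [Fintype V₂]

theorem anc_antisymm {T : RTree V} {a b : V} (hab : Anc T a b) (hba : Anc T b a) : a = b := by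
  unfold Anc at hab hba
  have := SimpleGraph.dist_comm (G := T.adj) (u := a) (v := b)
  exact T.isTree.connected.dist_eq_zero_iff.1 (by omega)

theorem anc_trans {T : RTree V} {a b c : V} (hab : Anc T a b) (hbc : Anc T b c) :
    Anc T a c := by
  unfold Anc at *
  have := T.isTree.connected.dist_triangle (u := a) (v := b) (w := c)
  have := T.isTree.connected.dist_triangle (u := T.root) (v := a) (w := c)
  omega

theorem anc_iff_mem_support {T : RTree V} {a b : V} {p : T.adj.Walk T.root b} (hp : p.IsPath) :
    Anc T a b ↔ a ∈ p.support := by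
  have hT := T.isTree
  constructor
  · intro h
    obtain ⟨q, -, hq⟩ := hT.connected.exists_path_of_dist T.root a
    obtain ⟨r, -, hr⟩ := hT.connected.exists_path_of_dist a b
    have hqr : (q.append r).IsPath :=
      (q.append r).isPath_of_length_eq_dist (by rw [Walk.length_append, hq, hr]; exact h.symm)
    obtain ⟨s, -, hs⟩ := hT.existsUnique_path T.root b
    rw [← (hs _ hqr).trans (hs p hp).symm]
    exact (Walk.mem_support_append_iff _ _).2 (Or.inl q.end_mem_support)
  · intro h
    obtain ⟨q, r, hq, hr, rfl⟩ := hp.mem_support_iff_exists_append.1 h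
    rw [Anc, ← hT.length_eq_dist hp, ← hT.length_eq_dist hq, ← hT.length_eq_dist hr,
      Walk.length_append]

theorem anc_map_iff {T : RTree V} {T' : RTree V₂} (φ : V → V₂)
    (hfib : ∀ a b, φ a = φ b → a = b ∨ T.adj.Adj a b)
    (hadj : ∀ a b, T.adj.Adj a b → φ a ≠ φ b → T'.adj.Adj (φ a) (φ b))
    (hroot : φ T.root = T'.root) (a b : V) :
    Anc T' (φ a) (φ b) ↔ ∃ a', φ a' = φ a ∧ Anc T a' b := by
  obtain ⟨p, hp, -⟩ := T.isTree.connected.exists_path_of_dist T.root b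
  obtain ⟨q, hq, hsupp⟩ := T.isTree.isAcyclic.exists_isPath_support_eq_image φ hfib hadj p hp
  rw [anc_iff_mem_support (p := q.copy hroot rfl) (by simpa using hq), Walk.support_copy, hsupp]
  simp only [anc_iff_mem_support hp]
  grind

end RTree

theorem IsLCA.unique {V : Type*} [Fintype V] {T : RTree V} {X : Set V} {w w' : V}
    (hw : IsLCA T X w) (hw' : IsLCA T X w') : w = w' :=
  RTree.anc_antisymm (hw'.2 w hw.1) (hw.2 w' hw'.1)

section Dissimilarity

variable {VH : Type*} [Fintype VH] {𝒢 : Recon Γ VG₁ VS S} {𝒢' : Recon Γ VG₂ VS S}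
  {ℋ : Recon Γ VH VS S}

theorem dPath_le_of_injective {m : VG₁ → VH} {m' : VG₂ → VH} (ψ : VG₂ → VG₁)
    (hψ : Function.Injective ψ) (hμ : ∀ x, 𝒢'.μ x = 𝒢.μ (ψ x)) (hm : ∀ x, m' x = m (ψ x)) :
    dPath 𝒢' ℋ m' ≤ dPath 𝒢 ℋ m := by
  unfold dPath
  simp only [hμ, hm]
  exact (Finset.sum_map Finset.univ ⟨ψ, hψ⟩ fun a => S.adj.dist (𝒢.μ a) (ℋ.μ (m a))).symm.trans_le
    (Finset.sum_le_sum_of_subset (Finset.subset_univ _))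

theorem dLbl_le_of_injective {m : VG₁ → VH} {m' : VG₂ → VH} (ψ : VG₂ → VG₁)
    (hψ : Function.Injective ψ) (hlbl : ∀ x, 𝒢'.lbl x = 𝒢.lbl (ψ x))
    (hm : ∀ x, m' x = m (ψ x)) :
    dLbl 𝒢' ℋ m' ≤ dLbl 𝒢 ℋ m :=
  Set.ncard_le_ncard_of_injOn ψ (fun x hx => by simpa [hlbl, hm] using hx)
    hψ.injOn (Set.toFinite _)

theorem dAsym_le_of_injective {α : ℝ} (hα₀ : 0 ≤ α) (hα₁ : α ≤ 1) {m : VG₁ → VH}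
    {m' : VG₂ → VH} (ψ : VG₂ → VG₁) (hψ : Function.Injective ψ)
    (hμ : ∀ x, 𝒢'.μ x = 𝒢.μ (ψ x)) (hlbl : ∀ x, 𝒢'.lbl x = 𝒢.lbl (ψ x))
    (hm : ∀ x, m' x = m (ψ x)) :
    dAsym α 𝒢' ℋ m' ≤ dAsym α 𝒢 ℋ m := by
  unfold dAsym
  have : 0 ≤ 1 - α := by linarith
  gcongr
  exacts [dPath_le_of_injective ψ hψ hμ hm, dLbl_le_of_injective ψ hψ hlbl hm]

theorem dAsym_comp (α : ℝ) (φ : VG₁ → VG₂) (hμ : ∀ a, 𝒢'.μ (φ a) = 𝒢.μ a)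
    (hlbl : ∀ a, 𝒢'.lbl (φ a) = 𝒢.lbl a) (m : VH → VG₁) :
    dAsym α ℋ 𝒢' (φ ∘ m) = dAsym α ℋ 𝒢 m := by
  simp only [dAsym, dPath, dLbl, Function.comp_apply, hμ, hlbl]

end Dissimilarity

namespace IsContractionOf

variable {VH : Type*} [Fintype VH] {𝒢 : Recon Γ VG₁ VS S} {𝒢' : Recon Γ VG₂ VS S}
  {ℋ : Recon Γ VH VS S} {u v : VG₁} {φ : VG₁ → VG₂}

theorem anc_map_iff (hφ : IsContractionOf 𝒢 u v 𝒢' φ) (huv : 𝒢.tree.adj.Adj u v) (a b : VG₁) :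
    Anc 𝒢'.tree (φ a) (φ b) ↔ ∃ a', φ a' = φ a ∧ Anc 𝒢.tree a' b := by
  obtain ⟨-, hφuv, hfib, hadj, hroot, -⟩ := hφ
  refine RTree.anc_map_iff φ (fun a b hab => ?_) (fun a b hab hne => ?_) hroot.symm a b
  · rcases hfib a b hab with h | ⟨rfl, rfl⟩ | ⟨rfl, rfl⟩
    exacts [.inl h, .inr huv, .inr huv.symm]
  · exact (hadj _ _).2 ⟨a, b, rfl, rfl, hab, fun ⟨ha, hb⟩ => hne (ha ▸ hb ▸ hφuv),
      fun ⟨ha, hb⟩ => hne (ha ▸ hb ▸ hφuv.symm)⟩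

/-- Away from `v`, the contraction neither creates nor destroys ancestry: the only node merged
with `a ≠ v` is `v` itself when `a = u`, and `v` lies below `u`. -/
theorem anc_map_iff_of_ne (hφ : IsContractionOf 𝒢 u v 𝒢' φ) (hvu : IsChild 𝒢.tree v u)
    {a : VG₁} (hav : a ≠ v) (b : VG₁) :
    Anc 𝒢'.tree (φ a) (φ b) ↔ Anc 𝒢.tree a b := by
  rw [hφ.anc_map_iff hvu.1.symm]
  refine ⟨fun ⟨a', ha', hanc⟩ => ?_, fun h => ⟨a, rfl, h⟩⟩
  rcases hφ.2.2.1 a' a ha' with rfl | ⟨-, rfl⟩ | ⟨rfl, rfl⟩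
  exacts [hanc, absurd rfl hav, RTree.anc_trans hvu.2 hanc]

theorem exists_ne_map_eq (hφ : IsContractionOf 𝒢 u v 𝒢' φ) (hvu : IsChild 𝒢.tree v u)
    (x : VG₂) : ∃ a, a ≠ v ∧ φ a = x := by
  obtain ⟨a, rfl⟩ := hφ.1 x
  by_cases hav : a = v
  · exact ⟨u, hvu.1.ne', by rw [hav, hφ.2.1]⟩
  · exact ⟨a, hav, rfl⟩

theorem gclade_map_of_ne (hφ : IsContractionOf 𝒢 u v 𝒢' φ) (hvu : IsChild 𝒢.tree v u)
    {a : VG₁} (hav : a ≠ v) : gclade 𝒢' (φ a) = gclade 𝒢 a := by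
  ext g
  simp only [gclade, Set.mem_ofPred_eq, hφ.2.2.2.2.2.1, hφ.anc_map_iff_of_ne hvu hav]

theorem lcaMap_map_of_ne (hφ : IsContractionOf 𝒢 u v 𝒢' φ) (hvu : IsChild 𝒢.tree v u)
    {m : VG₁ → VH} {m' : VG₂ → VH} (hm : IsLcaMap 𝒢 ℋ m) (hm' : IsLcaMap 𝒢' ℋ m')
    {a : VG₁} (hav : a ≠ v) : m' (φ a) = m a := by
  have h := hm' (φ a)
  rw [hφ.gclade_map_of_ne hvu hav] at h
  exact h.unique (hm a)

theorem isLcaMap_comp (hφ : IsContractionOf 𝒢 u v 𝒢' φ) (hvu : IsChild 𝒢.tree v u)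
    {m : VH → VG₁} (hm : IsLcaMap ℋ 𝒢 m) : IsLcaMap ℋ 𝒢' (φ ∘ m) := by
  intro w
  have hleaf := hφ.2.2.2.2.2.1
  refine ⟨?_, fun x hx => ?_⟩
  · rintro _ ⟨g, hg, rfl⟩
    rw [hleaf, Function.comp_apply, hφ.anc_map_iff hvu.1.symm]
    exact ⟨m w, rfl, (hm w).1 _ ⟨g, hg, rfl⟩⟩
  · obtain ⟨c, hcv, rfl⟩ := hφ.exists_ne_map_eq hvu x
    rw [Function.comp_apply, hφ.anc_map_iff_of_ne hvu hcv]
    refine (hm w).2 c ?_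
    rintro _ ⟨g, hg, rfl⟩
    rw [← hφ.anc_map_iff_of_ne hvu hcv, ← hleaf]
    exact hx _ ⟨g, hg, rfl⟩

theorem dAsym_le (hφ : IsContractionOf 𝒢 u v 𝒢' φ) (hvu : IsChild 𝒢.tree v u) {α : ℝ}
    (hα₀ : 0 ≤ α) (hα₁ : α ≤ 1) {m : VG₁ → VH} {m' : VG₂ → VH} (hm : IsLcaMap 𝒢 ℋ m)
    (hm' : IsLcaMap 𝒢' ℋ m') :
    dAsym α 𝒢' ℋ m' ≤ dAsym α 𝒢 ℋ m := by
  choose ψ hψv hψ using hφ.exists_ne_map_eq hvu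
  have hψm : ∀ x, m' x = m (ψ x) := fun x => by
    rw [← hφ.lcaMap_map_of_ne hvu hm hm' (hψv x), hψ]
  obtain ⟨-, -, -, -, -, -, hμ, hlbl⟩ := hφ
  refine dAsym_le_of_injective hα₀ hα₁ ψ (Function.LeftInverse.injective hψ) (fun x => ?_)
    (fun x => ?_) hψm
  · rw [← hμ, hψ]
  · rw [← hlbl, hψ]

theorem dAsym_eq (hφ : IsContractionOf 𝒢 u v 𝒢' φ) (hvu : IsChild 𝒢.tree v u) (α : ℝ)
    {m : VH → VG₁} {m' : VH → VG₂} (hm : IsLcaMap ℋ 𝒢 m) (hm' : IsLcaMap ℋ 𝒢' m') :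
    dAsym α ℋ 𝒢' m' = dAsym α ℋ 𝒢 m := by
  have hcomp : m' = φ ∘ m := funext fun w => (hm' w).unique (hφ.isLcaMap_comp hvu hm w)
  rw [hcomp]
  exact dAsym_comp α φ hφ.2.2.2.2.2.2.1 hφ.2.2.2.2.2.2.2 m

end IsContractionOf

theorem stmt1_general {VG₁' : Type*} [Fintype VG₁']
    (𝒢₁ : Recon Γ VG₁ VS S) (𝒢₂ : Recon Γ VG₂ VS S) (𝒢₁' : Recon Γ VG₁' VS S)
    (α : ℝ) (hα₀ : 0 ≤ α) (hα₁ : α ≤ 1)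
    (u v : VG₁) (hred : RedundantEdge 𝒢₁ u v)
    (φ : VG₁ → VG₁') (hφ : IsContractionOf 𝒢₁ u v 𝒢₁' φ)
    (m₁₂ : VG₁ → VG₂) (m₂₁ : VG₂ → VG₁) (m₁₂' : VG₁' → VG₂) (m₂₁' : VG₂ → VG₁')
    (hm₁₂ : IsLcaMap 𝒢₁ 𝒢₂ m₁₂) (hm₂₁ : IsLcaMap 𝒢₂ 𝒢₁ m₂₁)
    (hm₁₂' : IsLcaMap 𝒢₁' 𝒢₂ m₁₂') (hm₂₁' : IsLcaMap 𝒢₂ 𝒢₁' m₂₁') :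
    PLR α 𝒢₁' 𝒢₂ m₁₂' m₂₁' ≤ PLR α 𝒢₁ 𝒢₂ m₁₂ m₂₁ :=
  add_le_add (hφ.dAsym_le hred.1 hα₀ hα₁ hm₁₂ hm₁₂') (hφ.dAsym_eq hred.1 α hm₂₁ hm₂₁').le

/-- Contracting a redundant edge cannot increase the PLR dissimilarity. -/
theorem stmt1 {VG₁' : Type*} [Fintype VG₁']
    (hS : IsSpeciesTree S)
    (𝒢₁ : Recon Γ VG₁ VS S) (𝒢₂ : Recon Γ VG₂ VS S) (𝒢₁' : Recon Γ VG₁' VS S)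
    (α : ℝ) (hα₀ : 0 ≤ α) (hα₁ : α ≤ 1)
    (hcomp : Comparable 𝒢₁ 𝒢₂)
    (u v : VG₁) (hred : RedundantEdge 𝒢₁ u v)
    (φ : VG₁ → VG₁') (hφ : IsContractionOf 𝒢₁ u v 𝒢₁' φ)
    (m₁₂ : VG₁ → VG₂) (m₂₁ : VG₂ → VG₁) (m₁₂' : VG₁' → VG₂) (m₂₁' : VG₂ → VG₁')
    (hm₁₂ : IsLcaMap 𝒢₁ 𝒢₂ m₁₂) (hm₂₁ : IsLcaMap 𝒢₂ 𝒢₁ m₂₁)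
    (hm₁₂' : IsLcaMap 𝒢₁' 𝒢₂ m₁₂') (hm₂₁' : IsLcaMap 𝒢₂ 𝒢₁' m₂₁') :
    PLR α 𝒢₁' 𝒢₂ m₁₂' m₂₁' ≤ PLR α 𝒢₁ 𝒢₂ m₁₂ m₂₁ :=
  stmt1_general 𝒢₁ 𝒢₂ 𝒢₁' α hα₀ hα₁ u v hred φ hφ m₁₂ m₂₁ m₁₂' m₂₁' hm₁₂ hm₂₁ hm₁₂' hm₂₁'
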